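/- arXiv:2108.10022 — 10 statements merged into one kernel-verified Lean document; each statement's English description precedes it below -/
import Mathlib

section
/- For 0 < α < 1 and integer n ≥ 2, the quantity φ_n(α)/n is strictly increasing in n; that is, φ_n(α)/n < φ_{n+1}(α)/(n+1). -/
/-!
With `c = cos (π α)` one has `φ_n(α) / n = (1 + (√(n² - 2nc + 1) - 1) / n) / (2 sin (π α / 2))`,
so it suffices that `x ↦ (√(x² - 2xc + 1) - 1) / x` is strictly increasing on `x > 0` whenever
`c² < 1`. For `0 < x < y`, squaring turns the comparison into `1 - y c < √(y² - 2yc + 1)`, which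
holds because the two squares differ by `y² (1 - c²) > 0`.
-/

noncomputable def phi (α : ℝ) (n : ℕ) : ℝ :=
  ((n : ℝ) - 1 + Real.sqrt ((n : ℝ)^2 - 2 * n * Real.cos (Real.pi * α) + 1)) /
    (2 * Real.sin (Real.pi * α / 2))

section

variable {c : ℝ}

lemma sq_sub_two_mul_add_one_nonneg (hc : c ^ 2 < 1) (x : ℝ) : 0 ≤ x ^ 2 - 2 * x * c + 1 := by
  nlinarith [sq_nonneg (x - c)]

lemma one_sub_mul_lt_sqrt (hc : c ^ 2 < 1) {y : ℝ} (hy : y ≠ 0) :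
    1 - y * c < √(y ^ 2 - 2 * y * c + 1) := by
  apply Real.lt_sqrt_of_sq_lt
  have : 0 < y ^ 2 * (1 - c ^ 2) := mul_pos (by positivity) (by linarith)
  nlinarith

lemma strictMonoOn_sqrt_sub_one_div (hc : c ^ 2 < 1) :
    StrictMonoOn (fun x : ℝ => (√(x ^ 2 - 2 * x * c + 1) - 1) / x) (Set.Ioi 0) := by
  intro x (hx : 0 < x) y (hy : 0 < y) hxy
  rw [div_lt_div_iff₀ hx hy]
  set fx := √(x ^ 2 - 2 * x * c + 1)
  set fy := √(y ^ 2 - 2 * y * c + 1)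
  have hfx : fx ^ 2 = x ^ 2 - 2 * x * c + 1 := Real.sq_sqrt (sq_sub_two_mul_add_one_nonneg hc x)
  have hfy : fy ^ 2 = y ^ 2 - 2 * y * c + 1 := Real.sq_sqrt (sq_sub_two_mul_add_one_nonneg hc y)
  have hfy_gt := one_sub_mul_lt_sqrt hc hy.ne'
  suffices y * fx < x * fy + (y - x) by linarith
  apply lt_of_pow_lt_pow_left₀ 2 (by positivity)
  -- the difference of the squares is `2 x (y - x) (fy - (1 - y c))`
  have : 0 < 2 * x * (y - x) * (fy - (1 - y * c)) :=
    mul_pos (mul_pos (by positivity) (by linarith)) (by linarith)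
  nlinarith

end

lemma phi_div_natCast (α : ℝ) {n : ℕ} (hn : n ≠ 0) :
    phi α n / n =
      (1 + (√((n : ℝ) ^ 2 - 2 * n * Real.cos (Real.pi * α) + 1) - 1) / n) /
        (2 * Real.sin (Real.pi * α / 2)) := by
  have hn' : (n : ℝ) ≠ 0 := Nat.cast_ne_zero.mpr hn
  rw [phi, div_right_comm]
  congr 1
  field_simp
  ring

lemma cos_sq_lt_one_of_mem_Ioo {α : ℝ} (hα0 : 0 < α) (hα1 : α < 1) :
    Real.cos (Real.pi * α) ^ 2 < 1 := by
  have : 0 < Real.sin (Real.pi * α) :=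
    Real.sin_pos_of_pos_of_lt_pi (by positivity) (by nlinarith [Real.pi_pos])
  nlinarith [Real.sin_sq_add_cos_sq (Real.pi * α)]

theorem stmt0 (α : ℝ) (hα0 : 0 < α) (hα1 : α < 1) (n : ℕ) (hn : 2 ≤ n) :
    phi α n / n < phi α (n + 1) / (n + 1) := by
  have hs : 0 < 2 * Real.sin (Real.pi * α / 2) :=
    mul_pos two_pos (Real.sin_pos_of_pos_of_lt_pi (by positivity) (by nlinarith [Real.pi_pos]))
  have hmono := strictMonoOn_sqrt_sub_one_div (cos_sq_lt_one_of_mem_Ioo hα0 hα1)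
  have hn0 : (0 : ℝ) < n := Nat.cast_pos.mpr (by omega)
  have hlt := hmono hn0 (show (0 : ℝ) < n + 1 by positivity) (lt_add_one _)
  have hsucc := phi_div_natCast α (Nat.succ_ne_zero n)
  push_cast at hsucc
  rw [phi_div_natCast α (by omega), hsucc]
  gcongr
end

section
/- For 0 < α < 1 and every integer n ≥ 2, we have n < φ_n(α) < n / sin(πα/2) < ψ_n(α). -/
noncomputable def psi (α : ℝ) (n : ℕ) : ℝ :=
  ((n : ℝ) + 1 + Real.sqrt ((n : ℝ)^2 + 2 * n * Real.cos (Real.pi * α) + 1)) /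
    (2 * Real.sin (Real.pi * α / 2))

open Real

theorem discrim_eq_sq_sub_mul_quadratic {R : Type*} [CommRing R] (a b c x : R) :
    discrim a b c = (2 * a * x + b) ^ 2 - 4 * a * (a * (x * x) + b * x + c) := by
  unfold discrim
  ring

theorem lt_quadratic_root_of_neg {a b c x : ℝ} (ha : 0 < a) (h : a * (x * x) + b * x + c < 0) :
    x < (-b + √(discrim a b c)) / (2 * a) := by
  have hsqrt : 2 * a * x + b < √(discrim a b c) := by
    apply lt_sqrt_of_sq_lt
    rw [discrim_eq_sq_sub_mul_quadratic a b c x]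
    nlinarith
  rw [lt_div_iff₀ (by positivity)]
  linarith

theorem quadratic_root_lt_of_pos {a b c x : ℝ} (ha : 0 < a) (hx : 0 < 2 * a * x + b)
    (h : 0 < a * (x * x) + b * x + c) : (-b + √(discrim a b c)) / (2 * a) < x := by
  have hsqrt : √(discrim a b c) < 2 * a * x + b := by
    rw [sqrt_lt' hx, discrim_eq_sq_sub_mul_quadratic a b c x]
    nlinarith
  rw [div_lt_iff₀ (by positivity)]
  linarith

theorem sin_pi_mul_div_two_mem_Ioo {α : ℝ} (h0 : 0 < α) (h1 : α < 1) :
    sin (π * α / 2) ∈ Set.Ioo 0 1 := by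
  have hπ := pi_pos
  refine ⟨sin_pos_of_pos_of_lt_pi (by positivity) (by nlinarith), ?_⟩
  simpa using sin_lt_sin_of_lt_of_le_pi_div_two (by nlinarith) le_rfl (by nlinarith)

theorem cos_pi_mul_eq_one_sub (α : ℝ) : cos (π * α) = 1 - 2 * sin (π * α / 2) ^ 2 := by
  rw [← cos_two_mul_eq_one_sub, mul_div_cancel₀ _ two_ne_zero]

theorem phi_eq_quadratic_root (α : ℝ) (n : ℕ) :
    phi α n = (-(1 - n) + √(discrim (sin (π * α / 2)) (1 - n) (-(n * sin (π * α / 2))))) /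
      (2 * sin (π * α / 2)) := by
  rw [phi, cos_pi_mul_eq_one_sub, discrim]
  ring_nf

theorem psi_eq_quadratic_root (α : ℝ) (n : ℕ) :
    psi α n = (-(-n - 1) + √(discrim (sin (π * α / 2)) (-n - 1) (n * sin (π * α / 2)))) /
      (2 * sin (π * α / 2)) := by
  rw [psi, cos_pi_mul_eq_one_sub, discrim]
  ring_nf

theorem stmt2 (α : ℝ) (hα0 : 0 < α) (hα1 : α < 1) (n : ℕ) (hn : 2 ≤ n) :
    (n : ℝ) < phi α n ∧ phi α n < n / Real.sin (Real.pi * α / 2) ∧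
      (n : ℝ) / Real.sin (Real.pi * α / 2) < psi α n := by
  rw [phi_eq_quadratic_root, psi_eq_quadratic_root]
  obtain ⟨hs0, hs1⟩ := sin_pi_mul_div_two_mem_Ioo hα0 hα1
  set s := sin (π * α / 2)
  have hn : (2 : ℝ) ≤ n := by exact_mod_cast hn
  have hs : 0 < 1 - s ^ 2 := by nlinarith
  have hphi_at_n : s * (n * n) + (1 - n) * n + -(n * s) = -(n * (n - 1) * (1 - s)) := by ring
  have hphi_at_n_div_s :
      s * (n / s * (n / s)) + (1 - n) * (n / s) + -(n * s) = n * (1 - s ^ 2) / s := by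
    field_simp
    ring
  have hpsi_at_n_div_s :
      s * (n / s * (n / s)) + (-n - 1) * (n / s) + n * s = -(n * (1 - s ^ 2) / s) := by
    field_simp
    ring
  refine ⟨lt_quadratic_root_of_neg hs0 ?_, quadratic_root_lt_of_pos hs0 ?_ ?_,
    lt_quadratic_root_of_neg hs0 ?_⟩
  · rw [hphi_at_n, neg_lt_zero]
    exact mul_pos (mul_pos (by linarith) (by linarith)) (by linarith)
  · rw [mul_assoc, mul_div_cancel₀ _ hs0.ne']
    linarith
  · rw [hphi_at_n_div_s]
    positivity
  · rw [hpsi_at_n_div_s, neg_lt_zero]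
    positivity
end

section
/- Let (a_n)_{n≥2} and (b_n)_{n≥1} be complex sequences with Σ_{n≥2} n|a_n| + Σ_{n≥1} n|b_n| ≤ k < 1. Define f(z) = z + Σ_{n≥2} a_n z^n + conj(Σ_{n≥1} b_n z^n) on the open unit disk. Then for all z₁, z₂ in the unit disk, (1−k)|z₁−z₂| ≤ |f(z₁)−f(z₂)| ≤ (1+k)|z₁−z₂|; in particular f is injective on the unit disk. -/
open Complex ComplexConjugate

/-! Since `|z ^ n - w ^ n| ≤ n |z - w|` on the closed unit disk, the coefficient condition makes
`f z - z` a `k`-Lipschitz perturbation of the identity there; the reverse triangle inequality then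
gives both bounds, and `k < 1` gives injectivity. -/

section

variable {R : Type*} [NormedCommRing R] [NormOneClass R]

theorem norm_pow_sub_pow_le_of_norm_le_one {z w : R} (hz : ‖z‖ ≤ 1) (hw : ‖w‖ ≤ 1) (n : ℕ) :
    ‖z ^ n - w ^ n‖ ≤ n * ‖z - w‖ := by
  rw [← geom_sum₂_mul]
  refine (norm_mul_le _ _).trans (mul_le_mul_of_nonneg_right ?_ (norm_nonneg _))
  calc ‖∑ i ∈ Finset.range n, z ^ i * w ^ (n - 1 - i)‖
      ≤ ∑ i ∈ Finset.range n, ‖z ^ i * w ^ (n - 1 - i)‖ := norm_sum_le _ _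
    _ ≤ ∑ _i ∈ Finset.range n, (1 : ℝ) := by
        have norm_pow_le_one {x : R} (hx : ‖x‖ ≤ 1) (m : ℕ) : ‖x ^ m‖ ≤ 1 :=
          (norm_pow_le _ _).trans (pow_le_one₀ (norm_nonneg _) hx)
        gcongr with i
        exact (norm_mul_le _ _).trans <|
          mul_le_one₀ (norm_pow_le_one hz i) (norm_nonneg _) (norm_pow_le_one hw _)
    _ = n := by simp

variable [CompleteSpace R] {c : ℕ → R} {p : ℕ → ℕ}

theorem summable_mul_pow_of_summable_mul_norm (hp : ∀ n, 1 ≤ p n)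
    (hc : Summable fun n => (p n : ℝ) * ‖c n‖) {z : R} (hz : ‖z‖ ≤ 1) :
    Summable fun n => c n * z ^ p n := by
  refine hc.of_norm_bounded fun n => ?_
  calc ‖c n * z ^ p n‖ ≤ ‖c n‖ * 1 :=
        (norm_mul_le _ _).trans <| by
          gcongr; exact (norm_pow_le _ _).trans (pow_le_one₀ (norm_nonneg _) hz)
    _ ≤ (p n : ℝ) * ‖c n‖ := by
        rw [mul_one]; exact le_mul_of_one_le_left (norm_nonneg _) (by exact_mod_cast hp n)

theorem norm_tsum_mul_pow_sub_tsum_mul_pow_le (hp : ∀ n, 1 ≤ p n)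
    (hc : Summable fun n => (p n : ℝ) * ‖c n‖) {z w : R} (hz : ‖z‖ ≤ 1) (hw : ‖w‖ ≤ 1) :
    ‖∑' n, c n * z ^ p n - ∑' n, c n * w ^ p n‖ ≤ (∑' n, (p n : ℝ) * ‖c n‖) * ‖z - w‖ := by
  rw [← (summable_mul_pow_of_summable_mul_norm hp hc hz).tsum_sub
    (summable_mul_pow_of_summable_mul_norm hp hc hw)]
  refine tsum_of_norm_bounded (hc.hasSum.mul_right _) fun n => ?_
  rw [← mul_sub, mul_comm (p n : ℝ), mul_assoc]
  exact (norm_mul_le _ _).trans <| by gcongr; exact norm_pow_sub_pow_le_of_norm_le_one hz hw _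

end

theorem norm_bounds_of_norm_sub_le_mul {E : Type*} [SeminormedAddCommGroup E] {u v : E} {k : ℝ}
    (h : ‖u - v‖ ≤ k * ‖v‖) : (1 - k) * ‖v‖ ≤ ‖u‖ ∧ ‖u‖ ≤ (1 + k) * ‖v‖ := by
  have h₁ := norm_sub_norm_le v u
  have h₂ := norm_sub_norm_le u v
  rw [norm_sub_rev] at h₁
  constructor <;> linarith

theorem stmt4 (a b : ℕ → ℂ) (k : ℝ) (hk : k < 1)
    (hsum : (∑' n : ℕ, ((n : ℝ) + 2) * ‖a (n + 2)‖) +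
      (∑' n : ℕ, ((n : ℝ) + 1) * ‖b (n + 1)‖) ≤ k)
    (hsa : Summable fun n : ℕ => ((n : ℝ) + 2) * ‖a (n + 2)‖)
    (hsb : Summable fun n : ℕ => ((n : ℝ) + 1) * ‖b (n + 1)‖)
    (f : ℂ → ℂ)
    (hf : ∀ z : ℂ, f z = z + (∑' n : ℕ, a (n + 2) * z ^ (n + 2)) +
      (starRingEnd ℂ) (∑' n : ℕ, b (n + 1) * z ^ (n + 1))) :
    (∀ z₁ z₂ : ℂ, ‖z₁‖ < 1 → ‖z₂‖ < 1 →
      (1 - k) * ‖z₁ - z₂‖ ≤ ‖f z₁ - f z₂‖ ∧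
        ‖f z₁ - f z₂‖ ≤ (1 + k) * ‖z₁ - z₂‖) ∧
      Set.InjOn f {z : ℂ | ‖z‖ < 1} := by
  have bounds : ∀ z₁ z₂ : ℂ, ‖z₁‖ < 1 → ‖z₂‖ < 1 →
      (1 - k) * ‖z₁ - z₂‖ ≤ ‖f z₁ - f z₂‖ ∧ ‖f z₁ - f z₂‖ ≤ (1 + k) * ‖z₁ - z₂‖ := by
    intro z₁ z₂ h₁ h₂
    have hA := norm_tsum_mul_pow_sub_tsum_mul_pow_le (c := fun n => a (n + 2)) (p := fun n => n + 2)
      (fun n => by omega) (by push_cast; exact hsa) h₁.le h₂.le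
    have hB := norm_tsum_mul_pow_sub_tsum_mul_pow_le (c := fun n => b (n + 1)) (p := fun n => n + 1)
      (fun n => by omega) (by push_cast; exact hsb) h₁.le h₂.le
    push_cast at hA hB
    refine norm_bounds_of_norm_sub_le_mul ?_
    calc ‖f z₁ - f z₂ - (z₁ - z₂)‖
        = ‖(∑' n, a (n + 2) * z₁ ^ (n + 2) - ∑' n, a (n + 2) * z₂ ^ (n + 2)) +
            conj (∑' n, b (n + 1) * z₁ ^ (n + 1) - ∑' n, b (n + 1) * z₂ ^ (n + 1))‖ := by
          rw [hf, hf, map_sub]; ring_nf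
      _ ≤ ‖∑' n, a (n + 2) * z₁ ^ (n + 2) - ∑' n, a (n + 2) * z₂ ^ (n + 2)‖ +
            ‖∑' n, b (n + 1) * z₁ ^ (n + 1) - ∑' n, b (n + 1) * z₂ ^ (n + 1)‖ :=
          (norm_add_le _ _).trans_eq (by rw [norm_conj])
      _ ≤ k * ‖z₁ - z₂‖ := by
          refine (add_le_add hA hB).trans ?_
          rw [← add_mul]
          exact mul_le_mul_of_nonneg_right hsum (norm_nonneg _)
  refine ⟨bounds, fun z₁ h₁ z₂ h₂ hf₁₂ => ?_⟩
  have hle := (bounds z₁ z₂ h₁ h₂).1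
  rw [hf₁₂, sub_self, norm_zero] at hle
  exact sub_eq_zero.mp (norm_le_zero_iff.mp (nonpos_of_mul_nonpos_right hle (sub_pos.mpr hk)))
end

section
/- Let (a_n)_{n≥2} and (b_n)_{n≥1} be complex sequences with Σ_{n≥2} n|a_n| + Σ_{n≥1} n|b_n| ≤ k < 1. Define F(z) = z + Σ_{n≥2} a_n conj(z)^{-n} + Σ_{n≥1} conj(b_n) z^{-n} for |z| ≥ 1. Then for all z₁, z₂ with |z₁| ≥ 1 and |z₂| ≥ 1, (1−k)|z₁−z₂| ≤ |F(z₁)−F(z₂)| ≤ (1+k)|z₁−z₂|. -/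
/-!
Writing `F z = z + G z`, each term `c n w ^ (-m)` of `G` (with `w = z` or `w = conj z`) is
`m ‖c n‖`-Lipschitz on `{1 ≤ ‖w‖}`, since `w ↦ w⁻¹` is `1`-Lipschitz there and `u ↦ u ^ m` is
`m`-Lipschitz on the closed unit ball. Summing, `G` is `k`-Lipschitz, and the triangle inequality
for `F = id + G` gives both bounds.
-/

open Complex

lemma norm_pow_sub_pow_le_of_norm_le_one_s5 {R : Type*} [SeminormedRing R] [NormOneClass R]
    {u v : R} (hu : ‖u‖ ≤ 1) (hv : ‖v‖ ≤ 1) (m : ℕ) :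
    ‖u ^ m - v ^ m‖ ≤ m * ‖u - v‖ := by
  induction m with
  | zero => simp
  | succ m ih =>
    have hsplit : u ^ (m + 1) - v ^ (m + 1) = u ^ m * (u - v) + (u ^ m - v ^ m) * v := by
      noncomm_ring
    have hpow : ‖u ^ m‖ ≤ 1 := (norm_pow_le u m).trans (pow_le_one₀ (norm_nonneg u) hu)
    calc ‖u ^ (m + 1) - v ^ (m + 1)‖
        ≤ ‖u ^ m‖ * ‖u - v‖ + ‖u ^ m - v ^ m‖ * ‖v‖ := by
          rw [hsplit]
          exact (norm_add_le _ _).trans (add_le_add (norm_mul_le _ _) (norm_mul_le _ _))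
      _ ≤ 1 * ‖u - v‖ + (m * ‖u - v‖) * 1 := by gcongr
      _ = (m + 1 : ℕ) * ‖u - v‖ := by push_cast; ring

section NormedDivisionRing

variable {𝕜 : Type*} [NormedDivisionRing 𝕜] {z w : 𝕜}

lemma norm_inv_sub_inv_le (hz : 1 ≤ ‖z‖) (hw : 1 ≤ ‖w‖) : ‖z⁻¹ - w⁻¹‖ ≤ ‖z - w‖ := by
  rw [← dist_eq_norm, ← dist_eq_norm,
    dist_inv_inv₀ (norm_pos_iff.mp (one_pos.trans_le hz)) (norm_pos_iff.mp (one_pos.trans_le hw))]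
  exact div_le_self dist_nonneg (one_le_mul_of_one_le_of_one_le hz hw)

lemma norm_zpow_neg_le_one (hz : 1 ≤ ‖z‖) (m : ℕ) : ‖z ^ (-(m : ℤ))‖ ≤ 1 := by
  rw [zpow_neg, zpow_natCast, norm_inv, norm_pow]
  exact inv_le_one_of_one_le₀ (one_le_pow₀ hz)

lemma norm_zpow_neg_sub_zpow_neg_le (hz : 1 ≤ ‖z‖) (hw : 1 ≤ ‖w‖) (m : ℕ) :
    ‖z ^ (-(m : ℤ)) - w ^ (-(m : ℤ))‖ ≤ m * ‖z - w‖ := by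
  have hinv : ∀ x : 𝕜, 1 ≤ ‖x‖ → ‖x⁻¹‖ ≤ 1 := fun x hx => by
    simpa using inv_le_one_of_one_le₀ hx
  simp only [zpow_neg, zpow_natCast, ← inv_pow]
  calc ‖z⁻¹ ^ m - w⁻¹ ^ m‖ ≤ m * ‖z⁻¹ - w⁻¹‖ :=
        norm_pow_sub_pow_le_of_norm_le_one_s5 (hinv z hz) (hinv w hw) m
    _ ≤ m * ‖z - w‖ := by gcongr; exact norm_inv_sub_inv_le hz hw

variable {c : ℕ → 𝕜} {d : ℕ}

lemma summable_mul_zpow_neg [CompleteSpace 𝕜] (hd : 1 ≤ d)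
    (hc : Summable fun n : ℕ => ((n : ℝ) + d) * ‖c n‖) (hz : 1 ≤ ‖z‖) :
    Summable fun n : ℕ => c n * z ^ (-((n : ℤ) + d)) := by
  refine hc.of_norm_bounded fun n => ?_
  have hpow := norm_zpow_neg_le_one hz (n + d)
  push_cast at hpow
  have hweight : (1 : ℝ) ≤ n + d := by
    have : (1 : ℝ) ≤ d := by exact_mod_cast hd
    linarith [n.cast_nonneg (α := ℝ)]
  calc ‖c n * z ^ (-((n : ℤ) + d))‖ ≤ ‖c n‖ * 1 :=
        (norm_mul_le _ _).trans (by gcongr)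
    _ ≤ ((n : ℝ) + d) * ‖c n‖ := by nlinarith [norm_nonneg (c n)]

lemma norm_tsum_mul_zpow_neg_sub_le [CompleteSpace 𝕜] (hd : 1 ≤ d)
    (hc : Summable fun n : ℕ => ((n : ℝ) + d) * ‖c n‖) (hz : 1 ≤ ‖z‖) (hw : 1 ≤ ‖w‖) :
    ‖∑' n : ℕ, c n * z ^ (-((n : ℤ) + d)) - ∑' n : ℕ, c n * w ^ (-((n : ℤ) + d))‖ ≤
      (∑' n : ℕ, ((n : ℝ) + d) * ‖c n‖) * ‖z - w‖ := by
  rw [← (summable_mul_zpow_neg hd hc hz).tsum_sub (summable_mul_zpow_neg hd hc hw),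
    ← tsum_mul_right]
  refine tsum_of_norm_bounded (hc.mul_right _).hasSum fun n => ?_
  have hterm := norm_zpow_neg_sub_zpow_neg_le hz hw (n + d)
  push_cast at hterm
  calc ‖c n * z ^ (-((n : ℤ) + d)) - c n * w ^ (-((n : ℤ) + d))‖
      ≤ ‖c n‖ * (((n : ℝ) + d) * ‖z - w‖) := by
        rw [← mul_sub]
        exact (norm_mul_le _ _).trans (by gcongr)
    _ = ((n : ℝ) + d) * ‖c n‖ * ‖z - w‖ := by ring

end NormedDivisionRing

theorem stmt5_general (a b : ℕ → ℂ) (k : ℝ)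
    (hsum : (∑' n : ℕ, ((n : ℝ) + 2) * ‖a (n + 2)‖) +
      (∑' n : ℕ, ((n : ℝ) + 1) * ‖b (n + 1)‖) ≤ k)
    (hsa : Summable fun n : ℕ => ((n : ℝ) + 2) * ‖a (n + 2)‖)
    (hsb : Summable fun n : ℕ => ((n : ℝ) + 1) * ‖b (n + 1)‖)
    (F : ℂ → ℂ)
    (hF : ∀ z : ℂ, 1 ≤ ‖z‖ →
      F z = z + (∑' n : ℕ, a (n + 2) * (starRingEnd ℂ) z ^ (-((n : ℤ) + 2))) +
        (∑' n : ℕ, (starRingEnd ℂ) (b (n + 1)) * z ^ (-((n : ℤ) + 1)))) :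
    ∀ z₁ z₂ : ℂ, 1 ≤ ‖z₁‖ → 1 ≤ ‖z₂‖ →
      (1 - k) * ‖z₁ - z₂‖ ≤ ‖F z₁ - F z₂‖ ∧
        ‖F z₁ - F z₂‖ ≤ (1 + k) * ‖z₁ - z₂‖ := by
  intro z₁ z₂ h₁ h₂
  have hA := norm_tsum_mul_zpow_neg_sub_le (c := fun n => a (n + 2)) (d := 2) one_le_two
    (by exact_mod_cast hsa) (z := starRingEnd ℂ z₁) (w := starRingEnd ℂ z₂)
    (by rwa [norm_conj]) (by rwa [norm_conj])
  have hB := norm_tsum_mul_zpow_neg_sub_le (c := fun n => starRingEnd ℂ (b (n + 1))) (d := 1)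
    le_rfl (by simpa only [norm_conj, Nat.cast_one] using hsb) h₁ h₂
  simp only [Nat.cast_ofNat, Nat.cast_one, norm_conj, ← map_sub] at hA hB
  have hperturb : ‖(F z₁ - F z₂) - (z₁ - z₂)‖ ≤ k * ‖z₁ - z₂‖ := by
    refine (Eq.trans_le ?_ ((norm_add_le _ _).trans (add_le_add hA hB))).trans ?_
    · rw [hF z₁ h₁, hF z₂ h₂]
      congr 1
      ring
    · rw [← add_mul]
      gcongr
  have hbounds := abs_le.mp ((abs_norm_sub_norm_le _ _).trans hperturb)
  constructor <;> linarith [hbounds.1, hbounds.2]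

theorem stmt5 (a b : ℕ → ℂ) (k : ℝ) (hk : k < 1)
    (hsum : (∑' n : ℕ, ((n : ℝ) + 2) * ‖a (n + 2)‖) +
      (∑' n : ℕ, ((n : ℝ) + 1) * ‖b (n + 1)‖) ≤ k)
    (hsa : Summable fun n : ℕ => ((n : ℝ) + 2) * ‖a (n + 2)‖)
    (hsb : Summable fun n : ℕ => ((n : ℝ) + 1) * ‖b (n + 1)‖)
    (F : ℂ → ℂ)
    (hF : ∀ z : ℂ, 1 ≤ ‖z‖ →
      F z = z + (∑' n : ℕ, a (n + 2) * (starRingEnd ℂ) z ^ (-((n : ℤ) + 2))) +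
        (∑' n : ℕ, (starRingEnd ℂ) (b (n + 1)) * z ^ (-((n : ℤ) + 1)))) :
    ∀ z₁ z₂ : ℂ, 1 ≤ ‖z₁‖ → 1 ≤ ‖z₂‖ →
      (1 - k) * ‖z₁ - z₂‖ ≤ ‖F z₁ - F z₂‖ ∧
        ‖F z₁ - F z₂‖ ≤ (1 + k) * ‖z₁ - z₂‖ :=
  stmt5_general a b k hsum hsa hsb F hF
end

section
/- Let 0 < k₁ < 1, 0 < k₂ < 1, and let (φ_n)_{n≥2}, (ψ_n)_{n≥1} be positive sequences with φ_n ≥ n/k₁ and ψ_n ≥ n/k₂. Suppose (a_n)_{n≥2}, (b_n)_{n≥1} satisfy ψ_1|b_1| + Σ_{n≥2}(φ_n|a_n| + ψ_n|b_n|) ≤ 1. Then for every z in the open unit disk, |Σ_{n≥1} n b_n z^{n−1}| ≤ k₂ · |1 + Σ_{n≥2} n a_n z^{n−1}|; in particular the dilatation of f = h + conj(g) satisfies |g'(z)/h'(z)| ≤ k₂ on the unit disk. -/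
/-!
On the closed unit disk every power `z ^ m` has norm at most one, so
`‖g'(z)‖ ≤ ∑ n ‖b_n‖ ≤ k₂ ∑ ψ_n ‖b_n‖ = k₂ B` and
`‖h'(z)‖ ≥ 1 - ∑ n ‖a_n‖ ≥ 1 - k₁ A ≥ 1 - A`, with `A = ∑ φ_n ‖a_n‖`
and `B = ∑ ψ_n ‖b_n‖`.
The coefficient condition reads `B ≤ 1 - A`, whence `‖g'(z)‖ ≤ k₂ (1 - A) ≤ k₂ ‖h'(z)‖`.
-/

section PowerSeriesOnClosedDisk

variable {R : Type*} [SeminormedRing R] [NormOneClass R]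

lemma norm_mul_pow_le_norm {z : R} (hz : ‖z‖ ≤ 1) (c : R) (m : ℕ) : ‖c * z ^ m‖ ≤ ‖c‖ :=
  calc ‖c * z ^ m‖ ≤ ‖c‖ * ‖z‖ ^ m := (norm_mul_le _ _).trans (by gcongr; exact norm_pow_le z m)
    _ ≤ ‖c‖ * 1 := by gcongr; exact pow_le_one₀ (norm_nonneg z) hz
    _ = ‖c‖ := mul_one _

lemma norm_tsum_mul_pow_le {c : ℕ → R} (hc : Summable fun n => ‖c n‖) {z : R} (hz : ‖z‖ ≤ 1)
    (e : ℕ → ℕ) : ‖∑' n, c n * z ^ e n‖ ≤ ∑' n, ‖c n‖ :=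
  tsum_of_norm_bounded hc.hasSum fun n => norm_mul_pow_le_norm hz (c n) (e n)

lemma one_sub_tsum_norm_le_norm_one_add {c : ℕ → R} (hc : Summable fun n => ‖c n‖) {z : R}
    (hz : ‖z‖ ≤ 1) (e : ℕ → ℕ) : 1 - ∑' n, ‖c n‖ ≤ ‖1 + ∑' n, c n * z ^ e n‖ := by
  have h := norm_sub_norm_le (1 : R) (-∑' n, c n * z ^ e n)
  rw [norm_one, norm_neg, sub_neg_eq_add] at h
  linarith [norm_tsum_mul_pow_le hc hz e]

end PowerSeriesOnClosedDisk

section WeightedCoefficients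

variable {R : Type*} [SeminormedRing R] {k : ℝ} {x c : ℕ → R} {w : ℕ → ℝ}

lemma norm_mul_le_mul_weight (hx : ∀ n, ‖x n‖ ≤ k * w n) (n : ℕ) :
    ‖x n * c n‖ ≤ k * (w n * ‖c n‖) :=
  calc ‖x n * c n‖ ≤ ‖x n‖ * ‖c n‖ := norm_mul_le _ _
    _ ≤ k * w n * ‖c n‖ := by gcongr; exact hx n
    _ = k * (w n * ‖c n‖) := mul_assoc _ _ _

lemma summable_norm_mul_of_norm_le_mul_weight (hx : ∀ n, ‖x n‖ ≤ k * w n)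
    (hw : Summable fun n => w n * ‖c n‖) : Summable fun n => ‖x n * c n‖ :=
  (hw.mul_left k).of_nonneg_of_le (fun _ => norm_nonneg _) (norm_mul_le_mul_weight hx)

lemma tsum_norm_mul_le_of_norm_le_mul_weight (hx : ∀ n, ‖x n‖ ≤ k * w n)
    (hw : Summable fun n => w n * ‖c n‖) :
    ∑' n, ‖x n * c n‖ ≤ k * ∑' n, w n * ‖c n‖ := by
  rw [← tsum_mul_left]
  exact (summable_norm_mul_of_norm_le_mul_weight hx hw).tsum_le_tsum
    (norm_mul_le_mul_weight hx) (hw.mul_left k)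

end WeightedCoefficients

lemma norm_natCast_add_le_mul_of_div_le {k w : ℝ} (hk : 0 < k) {n j : ℕ}
    (h : ((n + j : ℕ) : ℝ) / k ≤ w) : ‖(n : ℂ) + j‖ ≤ k * w := by
  rw [← Nat.cast_add, Complex.norm_natCast]
  exact (div_le_iff₀' hk).1 h

theorem stmt7_general (k₁ k₂ : ℝ) (hk₁ : 0 < k₁) (hk₁' : k₁ < 1) (hk₂ : 0 < k₂)
    (φ ψ : ℕ → ℝ)
    (hφ : ∀ n : ℕ, 2 ≤ n → (n : ℝ) / k₁ ≤ φ n)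
    (hψ : ∀ n : ℕ, 1 ≤ n → (n : ℝ) / k₂ ≤ ψ n)
    (a b : ℕ → ℂ)
    (hsa : Summable fun n : ℕ => φ (n + 2) * ‖a (n + 2)‖)
    (hsb : Summable fun n : ℕ => ψ (n + 2) * ‖b (n + 2)‖)
    (hcoef : ψ 1 * ‖b 1‖ +
      ((∑' n : ℕ, φ (n + 2) * ‖a (n + 2)‖) +
        (∑' n : ℕ, ψ (n + 2) * ‖b (n + 2)‖)) ≤ 1) :
    ∀ z : ℂ, ‖z‖ < 1 →
      ‖∑' n : ℕ, ((n : ℂ) + 1) * b (n + 1) * z ^ n‖ ≤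
        k₂ * ‖1 + ∑' n : ℕ, ((n : ℂ) + 2) * a (n + 2) * z ^ (n + 1)‖ := by
  intro z hz
  have hxa (n : ℕ) : ‖(n : ℂ) + (2 : ℕ)‖ ≤ k₁ * φ (n + 2) :=
    norm_natCast_add_le_mul_of_div_le hk₁ (hφ (n + 2) (by omega))
  have hxb (n : ℕ) : ‖(n : ℂ) + (1 : ℕ)‖ ≤ k₂ * ψ (n + 1) :=
    norm_natCast_add_le_mul_of_div_le hk₂ (hψ (n + 1) (by omega))
  push_cast at hxa hxb
  set A := ∑' n : ℕ, φ (n + 2) * ‖a (n + 2)‖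
  set B := ∑' n : ℕ, ψ (n + 2) * ‖b (n + 2)‖
  have hsb' : Summable fun n : ℕ => ψ (n + 1) * ‖b (n + 1)‖ := (summable_nat_add_iff 1).1 hsb
  have hB : ∑' n : ℕ, ψ (n + 1) * ‖b (n + 1)‖ = ψ 1 * ‖b 1‖ + B := hsb'.tsum_eq_zero_add
  have hg : ‖∑' n : ℕ, ((n : ℂ) + 1) * b (n + 1) * z ^ n‖ ≤ k₂ * (ψ 1 * ‖b 1‖ + B) :=
    hB ▸ (norm_tsum_mul_pow_le (summable_norm_mul_of_norm_le_mul_weight hxb hsb') hz.le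
      fun n => n).trans (tsum_norm_mul_le_of_norm_le_mul_weight hxb hsb')
  have hA := tsum_norm_mul_le_of_norm_le_mul_weight hxa hsa
  have hA₀ : 0 ≤ A :=
    (mul_nonneg_iff_of_pos_left hk₁).1 ((tsum_nonneg fun _ => norm_nonneg _).trans hA)
  have hh : 1 - A ≤ ‖1 + ∑' n : ℕ, ((n : ℂ) + 2) * a (n + 2) * z ^ (n + 1)‖ :=
    (one_sub_tsum_norm_le_norm_one_add (summable_norm_mul_of_norm_le_mul_weight hxa hsa)
      hz.le (· + 1)).trans' (by linarith [mul_le_of_le_one_left hA₀ hk₁'.le])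
  calc _ ≤ k₂ * (ψ 1 * ‖b 1‖ + B) := hg
    _ ≤ k₂ * (1 - A) := by gcongr; linarith
    _ ≤ _ := by gcongr

theorem stmt7 (k₁ k₂ : ℝ) (hk₁ : 0 < k₁) (hk₁' : k₁ < 1) (hk₂ : 0 < k₂) (hk₂' : k₂ < 1)
    (φ ψ : ℕ → ℝ) (hφpos : ∀ n, 2 ≤ n → 0 < φ n) (hψpos : ∀ n, 1 ≤ n → 0 < ψ n)
    (hφ : ∀ n : ℕ, 2 ≤ n → (n : ℝ) / k₁ ≤ φ n)
    (hψ : ∀ n : ℕ, 1 ≤ n → (n : ℝ) / k₂ ≤ ψ n)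
    (a b : ℕ → ℂ)
    (hsa : Summable fun n : ℕ => φ (n + 2) * ‖a (n + 2)‖)
    (hsb : Summable fun n : ℕ => ψ (n + 2) * ‖b (n + 2)‖)
    (hcoef : ψ 1 * ‖b 1‖ +
      ((∑' n : ℕ, φ (n + 2) * ‖a (n + 2)‖) +
        (∑' n : ℕ, ψ (n + 2) * ‖b (n + 2)‖)) ≤ 1) :
    ∀ z : ℂ, ‖z‖ < 1 →
      ‖∑' n : ℕ, ((n : ℂ) + 1) * b (n + 1) * z ^ n‖ ≤
        k₂ * ‖1 + ∑' n : ℕ, ((n : ℂ) + 2) * a (n + 2) * z ^ (n + 1)‖ :=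
  stmt7_general k₁ k₂ hk₁ hk₁' hk₂ φ ψ hφ hψ a b hsa hsb hcoef
end

section
/- Let 0 < k₁ < 1, 0 < k₂ < 1, and let (φ_n)_{n≥2}, (ψ_n)_{n≥1} be positive sequences with φ_n ≥ n/k₁ and ψ_n ≥ n/k₂, and suppose ψ_1|b_1| + Σ_{n≥2}(φ_n|a_n| + ψ_n|b_n|) ≤ 1. Then for every z with |z| > 1, |Σ_{n≥2} n a_n z^{−n−1}| ≤ k₁ · |1 − Σ_{n≥1} n conj(b_n) z^{−n−1}|. -/
/-!
Each coefficient condition dominates one of the two series: since `n ≤ k₁ φ_n`, `n ≤ k₂ ψ_n` and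
`|z^{-m}| ≤ 1` for `|z| > 1`, the numerator is at most `k₁ Σ φ_n |a_n|`, while the series `S` in
the denominator has `|S| ≤ k₂ (ψ_1 |b_1| + Σ ψ_n |b_n|) ≤ 1 - Σ φ_n |a_n|`. Hence
`Σ φ_n |a_n| ≤ 1 - |S| ≤ |1 - S|`.
-/

theorem norm_mul_zpow_le_norm {𝕜 : Type*} [NormedDivisionRing 𝕜] {x z : 𝕜} {m : ℤ}
    (hz : 1 ≤ ‖z‖) (hm : m ≤ 0) : ‖x * z ^ m‖ ≤ ‖x‖ := by
  rw [norm_mul, norm_zpow]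
  exact mul_le_of_le_one_right (norm_nonneg x) (zpow_le_one_of_nonpos₀ hz hm)

theorem norm_tsum_le_mul_tsum_of_div_le {E : Type*} [SeminormedAddCommGroup E]
    {f : ℕ → E} {w φ r : ℕ → ℝ} {k : ℝ} (hk : 0 < k) (hr : ∀ n, 0 ≤ r n)
    (hf : ∀ n, ‖f n‖ ≤ w n * r n) (hwφ : ∀ n, w n / k ≤ φ n)
    (hs : Summable fun n => φ n * r n) :
    ‖∑' n, f n‖ ≤ k * ∑' n, φ n * r n := by
  rw [← tsum_mul_left]
  refine tsum_of_norm_bounded (hs.mul_left k).hasSum fun n => (hf n).trans ?_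
  rw [← mul_assoc]
  exact mul_le_mul_of_nonneg_right ((div_le_iff₀' hk).mp (hwφ n)) (hr n)

theorem norm_natCast_add_mul_zpow_le {x z : ℂ} {m : ℤ} (n c : ℕ) (hz : 1 ≤ ‖z‖)
    (hm : m ≤ 0) : ‖((n : ℂ) + c) * x * z ^ m‖ ≤ ((n : ℝ) + c) * ‖x‖ := by
  refine (norm_mul_zpow_le_norm hz hm).trans_eq ?_
  rw [norm_mul, ← Nat.cast_add, Complex.norm_natCast, Nat.cast_add]

theorem stmt8_general (k₁ k₂ : ℝ) (hk₁ : 0 < k₁) (hk₂ : 0 < k₂) (hk₂' : k₂ < 1)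
    (φ ψ : ℕ → ℝ)
    (hφ : ∀ n : ℕ, 2 ≤ n → (n : ℝ) / k₁ ≤ φ n)
    (hψ : ∀ n : ℕ, 1 ≤ n → (n : ℝ) / k₂ ≤ ψ n)
    (a b : ℕ → ℂ)
    (hsa : Summable fun n : ℕ => φ (n + 2) * ‖a (n + 2)‖)
    (hsb : Summable fun n : ℕ => ψ (n + 2) * ‖b (n + 2)‖)
    (hcoef : ψ 1 * ‖b 1‖ +
      ((∑' n : ℕ, φ (n + 2) * ‖a (n + 2)‖) +
        (∑' n : ℕ, ψ (n + 2) * ‖b (n + 2)‖)) ≤ 1) :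
    ∀ z : ℂ, 1 < ‖z‖ →
      ‖∑' n : ℕ, ((n : ℂ) + 2) * a (n + 2) * z ^ (-((n : ℤ) + 3))‖ ≤
        k₁ * ‖1 - ∑' n : ℕ, ((n : ℂ) + 1) * (starRingEnd ℂ) (b (n + 1)) * z ^ (-((n : ℤ) + 2))‖ := by
  intro z hz
  set S := ∑' n : ℕ, ((n : ℂ) + 1) * (starRingEnd ℂ) (b (n + 1)) * z ^ (-((n : ℤ) + 2))
  have hφ' (n : ℕ) : ((n : ℝ) + 2) / k₁ ≤ φ (n + 2) := mod_cast hφ (n + 2) (by omega)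
  have hψ' (n : ℕ) : ((n : ℝ) + 1) / k₂ ≤ ψ (n + 1) := mod_cast hψ (n + 1) (by omega)
  have hsb₁ : Summable fun n : ℕ => ψ (n + 1) * ‖b (n + 1)‖ := (summable_nat_add_iff 1).mp hsb
  have hnum := norm_tsum_le_mul_tsum_of_div_le hk₁ (fun n => norm_nonneg (a (n + 2)))
    (fun n => norm_natCast_add_mul_zpow_le (m := -((n : ℤ) + 3)) n 2 hz.le (by omega)) hφ' hsa
  have hS : ‖S‖ ≤ k₂ * ∑' n : ℕ, ψ (n + 1) * ‖b (n + 1)‖ := by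
    refine norm_tsum_le_mul_tsum_of_div_le hk₂ (fun n => norm_nonneg (b (n + 1))) (fun n => ?_)
      hψ' hsb₁
    simpa using norm_natCast_add_mul_zpow_le (x := starRingEnd ℂ (b (n + 1)))
      (m := -((n : ℤ) + 2)) n 1 hz.le (by omega)
  have hψb_nonneg : 0 ≤ ∑' n : ℕ, ψ (n + 1) * ‖b (n + 1)‖ :=
    tsum_nonneg fun n => mul_nonneg ((div_nonneg (by positivity) hk₂.le).trans (hψ' n))
      (norm_nonneg _)
  have hden : ∑' n : ℕ, φ (n + 2) * ‖a (n + 2)‖ ≤ ‖1 - S‖ := by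
    have hS₁ := hS.trans (mul_le_of_le_one_left hψb_nonneg hk₂'.le)
    rw [hsb₁.tsum_eq_zero_add] at hS₁
    have := norm_sub_norm_le (1 : ℂ) S
    rw [norm_one] at this
    linarith
  exact hnum.trans (mul_le_mul_of_nonneg_left hden hk₁.le)

theorem stmt8 (k₁ k₂ : ℝ) (hk₁ : 0 < k₁) (hk₁' : k₁ < 1) (hk₂ : 0 < k₂) (hk₂' : k₂ < 1)
    (φ ψ : ℕ → ℝ) (hφpos : ∀ n, 2 ≤ n → 0 < φ n) (hψpos : ∀ n, 1 ≤ n → 0 < ψ n)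
    (hφ : ∀ n : ℕ, 2 ≤ n → (n : ℝ) / k₁ ≤ φ n)
    (hψ : ∀ n : ℕ, 1 ≤ n → (n : ℝ) / k₂ ≤ ψ n)
    (a b : ℕ → ℂ)
    (hsa : Summable fun n : ℕ => φ (n + 2) * ‖a (n + 2)‖)
    (hsb : Summable fun n : ℕ => ψ (n + 2) * ‖b (n + 2)‖)
    (hcoef : ψ 1 * ‖b 1‖ +
      ((∑' n : ℕ, φ (n + 2) * ‖a (n + 2)‖) +
        (∑' n : ℕ, ψ (n + 2) * ‖b (n + 2)‖)) ≤ 1) :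
    ∀ z : ℂ, 1 < ‖z‖ →
      ‖∑' n : ℕ, ((n : ℂ) + 2) * a (n + 2) * z ^ (-((n : ℤ) + 3))‖ ≤
        k₁ * ‖1 - ∑' n : ℕ, ((n : ℂ) + 1) * (starRingEnd ℂ) (b (n + 1)) * z ^ (-((n : ℤ) + 2))‖ :=
  stmt8_general k₁ k₂ hk₁ hk₂ hk₂' φ ψ hφ hψ a b hsa hsb hcoef
end

section
/- Let 0 < α < 1, n ≥ 2 an integer, and let b be a complex number with |b| ≤ 2 sin(πα/2)/((n+1) + |n + e^{iπα}|). Then n|b| < 1, and the map f(z) = z + b·conj(z)^n is injective on the open unit disk. -/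
/-!
Since `|n + e^{iπα}| ≥ n - 1`, the denominator is at least `2n`, so `n|b| ≤ sin(πα/2) < 1`.
On the closed unit disk `z ↦ b conj(z)^n` is Lipschitz with constant `n|b| < 1`, and a
contraction added to the identity is injective.
-/

open Complex ComplexConjugate Metric Set NNReal

theorem norm_pow_sub_pow_le_of_norm_le_one_s13 {R : Type*} [NormedCommRing R] [NormOneClass R]
    {x y : R} (hx : ‖x‖ ≤ 1) (hy : ‖y‖ ≤ 1) (n : ℕ) :
    ‖x ^ n - y ^ n‖ ≤ n * ‖x - y‖ := by
  rw [← geom_sum₂_mul]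
  refine (norm_mul_le _ _).trans (mul_le_mul_of_nonneg_right ?_ (norm_nonneg _))
  calc ‖∑ i ∈ Finset.range n, x ^ i * y ^ (n - 1 - i)‖
      ≤ ∑ i ∈ Finset.range n, ‖x ^ i * y ^ (n - 1 - i)‖ := norm_sum_le _ _
    _ ≤ ∑ _i ∈ Finset.range n, (1 : ℝ) := Finset.sum_le_sum fun i _ =>
        (norm_mul_le _ _).trans <|
          mul_le_one₀ ((norm_pow_le _ _).trans (pow_le_one₀ (norm_nonneg _) hx))
            (norm_nonneg _) ((norm_pow_le _ _).trans (pow_le_one₀ (norm_nonneg _) hy))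
    _ = n := by simp

theorem lipschitzOnWith_mul_conj_pow (b : ℂ) (n : ℕ) :
    LipschitzOnWith (n * ‖b‖₊) (fun z : ℂ => b * conj z ^ n) (closedBall 0 1) := by
  refine LipschitzOnWith.of_dist_le_mul fun z hz w hw => ?_
  rw [mem_closedBall_zero_iff] at hz hw
  calc dist (b * conj z ^ n) (b * conj w ^ n) = ‖b‖ * ‖conj z ^ n - conj w ^ n‖ := by
        rw [dist_eq_norm, ← mul_sub, norm_mul]
    _ ≤ ‖b‖ * (n * ‖conj z - conj w‖) := by
        gcongr
        exact norm_pow_sub_pow_le_of_norm_le_one_s13 (by simpa) (by simpa) n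
    _ = (n * ‖b‖₊ : ℝ≥0) * dist z w := by
        rw [← map_sub, norm_conj, dist_eq_norm]; push_cast; ring

theorem injOn_add_of_lipschitzOnWith {E : Type*} [NormedAddCommGroup E] {g : E → E} {K : ℝ≥0}
    {s : Set E} (hK : K < 1) (hg : LipschitzOnWith K g s) :
    InjOn (fun x => x + g x) s := by
  rw [injOn_iff_injective]
  exact (isometry_subtype_coe.antilipschitz.add_lipschitzWith hg.to_restrict
    (by simpa using hK)).injective

theorem natCast_mul_norm_lt_one_of_norm_le {α : ℝ} (hα0 : 0 < α) (hα1 : α < 1) (n : ℕ) {b : ℂ}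
    (hb : ‖b‖ ≤ 2 * Real.sin (Real.pi * α / 2) /
      (((n : ℝ) + 1) + ‖(n : ℂ) + Complex.exp (Real.pi * α * Complex.I)‖)) :
    (n : ℝ) * ‖b‖ < 1 := by
  set s := Real.sin (Real.pi * α / 2)
  set D := ((n : ℝ) + 1) + ‖(n : ℂ) + Complex.exp (Real.pi * α * Complex.I)‖
  have hs0 : 0 ≤ s := Real.sin_nonneg_of_nonneg_of_le_pi (by positivity) (by nlinarith [Real.pi_pos])
  have hs1 : s < 1 := by
    rw [← Real.sin_pi_div_two]
    exact Real.sin_lt_sin_of_lt_of_le_pi_div_two (by nlinarith [Real.pi_pos])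
      le_rfl (by nlinarith [Real.pi_pos])
  have hD : 2 * n ≤ D := by
    have hexp : ‖Complex.exp (Real.pi * α * Complex.I)‖ = 1 := by
      simpa using norm_exp_ofReal_mul_I (Real.pi * α)
    have hrev := norm_sub_norm_le (n : ℂ) (-Complex.exp (Real.pi * α * Complex.I))
    simp only [norm_natCast, norm_neg, hexp, sub_neg_eq_add] at hrev
    linarith
  have hD0 : 0 < D := by positivity
  calc (n : ℝ) * ‖b‖ ≤ n * (2 * s / D) := by gcongr
    _ ≤ s := by rw [mul_div_assoc', div_le_iff₀ hD0]; nlinarith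
    _ < 1 := hs1

theorem stmt13_general (α : ℝ) (hα0 : 0 < α) (hα1 : α < 1) (n : ℕ) (b : ℂ)
    (hb : ‖b‖ ≤ 2 * Real.sin (Real.pi * α / 2) /
      (((n : ℝ) + 1) + ‖(n : ℂ) + Complex.exp (Real.pi * α * Complex.I)‖)) :
    (n : ℝ) * ‖b‖ < 1 ∧
      Set.InjOn (fun z : ℂ => z + b * (starRingEnd ℂ) z ^ n) {z : ℂ | ‖z‖ < 1} := by
  have hnb := natCast_mul_norm_lt_one_of_norm_le hα0 hα1 n hb
  refine ⟨hnb, (injOn_add_of_lipschitzOnWith ?_ (lipschitzOnWith_mul_conj_pow b n)).mono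
    fun z hz => mem_closedBall_zero_iff.2 (le_of_lt hz)⟩
  rw [← NNReal.coe_lt_coe]
  exact_mod_cast hnb

theorem stmt13 (α : ℝ) (hα0 : 0 < α) (hα1 : α < 1) (n : ℕ) (hn : 2 ≤ n) (b : ℂ)
    (hb : ‖b‖ ≤ 2 * Real.sin (Real.pi * α / 2) /
      (((n : ℝ) + 1) + ‖(n : ℂ) + Complex.exp (Real.pi * α * Complex.I)‖)) :
    (n : ℝ) * ‖b‖ < 1 ∧
      Set.InjOn (fun z : ℂ => z + b * (starRingEnd ℂ) z ^ n) {z : ℂ | ‖z‖ < 1} :=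
  stmt13_general α hα0 hα1 n b hb
end

section
/- Let α, β, A be complex numbers, (a_n), (b_n) complex sequences with |β| + |A| + Σ_{n≥1} n(|a_n| + |b_n|) ≤ k|α|, 0 < k < 1. Then for |z| > 1: |β + A/(2·conj(z)) − conj(Σ_{n≥1} n b_n z^{−n−1})| ≤ k·|α + A/(2z) − Σ_{n≥1} n a_n z^{−n−1}|. -/
/-!
Both sides are estimated term by term: for `|z| > 1` every factor `|z|^{-m}` is at most `1`, so
the numerator is at most `|β| + |A|/2 + Σ n|b_n|` and the denominator at least
`|α| - |A|/2 - Σ n|a_n|`. Since `k ≤ 1`, `k` times the latter still dominates the former.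
-/

lemma norm_div_two_mul_le (A : ℂ) {w : ℂ} (hw : 1 ≤ ‖w‖) :
    ‖A / (2 * w)‖ ≤ ‖A‖ / 2 := by
  rw [norm_div, norm_mul, Complex.norm_two]
  gcongr
  linarith

lemma norm_natCast_add_one_mul_mul_zpow_le (c : ℂ) {z : ℂ} (hz : 1 ≤ ‖z‖) (n : ℕ) :
    ‖((n : ℂ) + 1) * c * z ^ (-((n : ℤ) + 2))‖ ≤ ((n : ℝ) + 1) * ‖c‖ := by
  have hpow : ‖z‖ ^ (-((n : ℤ) + 2)) ≤ 1 := zpow_le_one_of_nonpos₀ hz (by omega)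
  rw [norm_mul, norm_mul, norm_zpow, ← Nat.cast_succ, Complex.norm_natCast, Nat.cast_succ]
  exact mul_le_of_le_one_right (by positivity) hpow

lemma norm_tsum_natCast_add_one_mul_mul_zpow_le (c : ℕ → ℂ) {z : ℂ} (hz : 1 ≤ ‖z‖)
    (hc : Summable fun n : ℕ => ((n : ℝ) + 1) * ‖c (n + 1)‖) :
    ‖∑' n : ℕ, ((n : ℂ) + 1) * c (n + 1) * z ^ (-((n : ℤ) + 2))‖ ≤
      ∑' n : ℕ, ((n : ℝ) + 1) * ‖c (n + 1)‖ :=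
  tsum_of_norm_bounded hc.hasSum fun n => norm_natCast_add_one_mul_mul_zpow_le _ hz n

lemma norm_add_div_two_mul_sub_le (β A T : ℂ) {w : ℂ} (hw : 1 ≤ ‖w‖) :
    ‖β + A / (2 * w) - T‖ ≤ ‖β‖ + ‖A‖ / 2 + ‖T‖ :=
  calc ‖β + A / (2 * w) - T‖ ≤ ‖β‖ + ‖A / (2 * w)‖ + ‖T‖ :=
        (norm_sub_le _ _).trans (by gcongr; exact norm_add_le _ _)
    _ ≤ ‖β‖ + ‖A‖ / 2 + ‖T‖ := by gcongr; exact norm_div_two_mul_le A hw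

lemma sub_sub_le_norm_add_div_two_mul_sub (α A S : ℂ) {w : ℂ} (hw : 1 ≤ ‖w‖) :
    ‖α‖ - ‖A‖ / 2 - ‖S‖ ≤ ‖α + A / (2 * w) - S‖ := by
  have htri : ‖α‖ ≤ ‖α + A / (2 * w) - S‖ + ‖A / (2 * w)‖ + ‖S‖ :=
    calc ‖α‖ = ‖(α + A / (2 * w) - S) - A / (2 * w) + S‖ := by ring_nf
      _ ≤ _ := (norm_add_le _ _).trans (by gcongr; exact norm_sub_le _ _)
  linarith [norm_div_two_mul_le A hw]

theorem stmt15 (α β A : ℂ) (a b : ℕ → ℂ) (k : ℝ) (hk0 : 0 < k) (hk1 : k < 1)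
    (hsum : Summable fun n : ℕ => ((n : ℝ) + 1) *
      (‖a (n + 1)‖ + ‖b (n + 1)‖))
    (hcoef : ‖β‖ + ‖A‖ +
      (∑' n : ℕ, ((n : ℝ) + 1) * (‖a (n + 1)‖ + ‖b (n + 1)‖)) ≤
        k * ‖α‖) :
    ∀ z : ℂ, 1 < ‖z‖ →
      ‖β + A / (2 * (starRingEnd ℂ) z) -
          (starRingEnd ℂ) (∑' n : ℕ, ((n : ℂ) + 1) * b (n + 1) * z ^ (-((n : ℤ) + 2)))‖ ≤
        k * ‖α + A / (2 * z) -
          (∑' n : ℕ, ((n : ℂ) + 1) * a (n + 1) * z ^ (-((n : ℤ) + 2)))‖ := by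
  intro z hz
  have hz' : 1 ≤ ‖(starRingEnd ℂ) z‖ := (Complex.norm_conj z).symm ▸ hz.le
  have ha : Summable fun n : ℕ => ((n : ℝ) + 1) * ‖a (n + 1)‖ :=
    hsum.of_nonneg_of_le (fun n => by positivity) fun n => by
      gcongr; exact le_add_of_nonneg_right (norm_nonneg _)
  have hb : Summable fun n : ℕ => ((n : ℝ) + 1) * ‖b (n + 1)‖ :=
    hsum.of_nonneg_of_le (fun n => by positivity) fun n => by
      gcongr; exact le_add_of_nonneg_left (norm_nonneg _)
  set Sa := ∑' n : ℕ, ((n : ℝ) + 1) * ‖a (n + 1)‖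
  set Sb := ∑' n : ℕ, ((n : ℝ) + 1) * ‖b (n + 1)‖
  have hsplit : ∑' n : ℕ, ((n : ℝ) + 1) * (‖a (n + 1)‖ + ‖b (n + 1)‖) = Sa + Sb := by
    simp only [mul_add]; exact ha.tsum_add hb
  calc _ ≤ ‖β‖ + ‖A‖ / 2 + Sb := (norm_add_div_two_mul_sub_le β A _ hz').trans <| by
          rw [Complex.norm_conj]; gcongr
          exact norm_tsum_natCast_add_one_mul_mul_zpow_le b hz.le hb
    _ ≤ k * (‖α‖ - ‖A‖ / 2 - Sa) := by
      have hslack : 0 ≤ (1 - k) * (‖A‖ / 2 + Sa) := mul_nonneg (by linarith) (by positivity)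
      linarith
    _ ≤ _ := by
      gcongr
      refine le_trans ?_ (sub_sub_le_norm_add_div_two_mul_sub α A _ hz.le)
      gcongr
      exact norm_tsum_natCast_add_one_mul_mul_zpow_le a hz.le ha
end

section
/- Let α₁, α₂ be nonzero complex numbers, β₁, β₂, c, C complex, and (a_n), (b_n), (A_n), (B_n) complex sequences. Suppose |β₁| + |c| + Σ_{n≥1} n(|a_n| + |b_n|) ≤ k₁|α₁| and |β₂| + |C| + Σ_{n≥1} n(|A_n| + |B_n|) ≤ k₂|α₂| with 0 < k₁ < 1 and 0 < k₂ < 1. Then |β₁β₂| + |cC| + Σ_{n≥1} n(|a_n A_n| + |b_n B_n|) ≤ sqrt(k₁k₂)·|α₁α₂|. -/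
/-!
Weighting the coefficients by `n + 1 ≥ 1` makes the coefficient functional `coeffNorm`
submultiplicative under the Hadamard product: each weighted product coefficient is at most
the product of the weighted coefficients, and a series of products of nonnegative terms is
dominated by the product of the series. Hence the Hadamard product lies in `Σ_H(k₁ k₂)`,
and `k₁ k₂ ≤ √(k₁ k₂)` because `k₁ k₂ ≤ 1`.
-/

section SeriesOfProducts

variable {ι : Type*} {f g : ι → ℝ}

lemma mul_le_tsum_mul_of_nonneg (hf0 : 0 ≤ f) (hg0 : 0 ≤ g) (hf : Summable f) (i : ι) :
    f i * g i ≤ (∑' j, f j) * g i :=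
  mul_le_mul_of_nonneg_right (hf.le_tsum i fun j _ => hf0 j) (hg0 i)

lemma summable_mul_of_nonneg (hf0 : 0 ≤ f) (hg0 : 0 ≤ g) (hf : Summable f) (hg : Summable g) :
    Summable fun i => f i * g i :=
  (hg.mul_left _).of_nonneg_of_le (fun i => mul_nonneg (hf0 i) (hg0 i))
    (mul_le_tsum_mul_of_nonneg hf0 hg0 hf)

lemma tsum_mul_le_tsum_mul_tsum_of_nonneg (hf0 : 0 ≤ f) (hg0 : 0 ≤ g) (hf : Summable f)
    (hg : Summable g) : ∑' i, f i * g i ≤ (∑' i, f i) * ∑' i, g i :=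
  calc ∑' i, f i * g i ≤ ∑' i, (∑' j, f j) * g i :=
        (summable_mul_of_nonneg hf0 hg0 hf hg).tsum_le_tsum
          (mul_le_tsum_mul_of_nonneg hf0 hg0 hf) (hg.mul_left _)
    _ = (∑' i, f i) * ∑' i, g i := tsum_mul_left

end SeriesOfProducts

section CoeffNorm

variable {R : Type*} [SeminormedRing R]

/-- Shifted by one: the paper's term of index `n ≥ 1` is `weightedCoeff a b (n - 1)`. -/
noncomputable def weightedCoeff (a b : ℕ → R) (n : ℕ) : ℝ :=
  ((n : ℝ) + 1) * (‖a (n + 1)‖ + ‖b (n + 1)‖)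

/-- `|β| + |c| + Σ_{n ≥ 1} n (|a_n| + |b_n|)`; the class `Σ_H(k)` is cut out by
`coeffNorm β c a b ≤ k |α|`. -/
noncomputable def coeffNorm (β c : R) (a b : ℕ → R) : ℝ :=
  ‖β‖ + ‖c‖ + ∑' n, weightedCoeff a b n

lemma weightedCoeff_nonneg (a b : ℕ → R) : 0 ≤ weightedCoeff a b := fun n => by
  unfold weightedCoeff
  positivity

lemma coeffNorm_nonneg (β c : R) (a b : ℕ → R) : 0 ≤ coeffNorm β c a b := by
  unfold coeffNorm
  have : 0 ≤ ∑' n, weightedCoeff a b n := tsum_nonneg (weightedCoeff_nonneg a b)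
  positivity

lemma weightedCoeff_mul_le (a b A B : ℕ → R) (n : ℕ) :
    weightedCoeff (a * A) (b * B) n ≤ weightedCoeff a b n * weightedCoeff A B n := by
  unfold weightedCoeff
  set m : ℝ := (n : ℝ) + 1
  have hm : 1 ≤ m := le_add_of_nonneg_left n.cast_nonneg
  have hab : ‖(a * A) (n + 1)‖ + ‖(b * B) (n + 1)‖ ≤
      ‖a (n + 1)‖ * ‖A (n + 1)‖ + ‖b (n + 1)‖ * ‖B (n + 1)‖ := by
    gcongr <;> exact norm_mul_le _ _
  set x := ‖a (n + 1)‖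
  set y := ‖b (n + 1)‖
  set X := ‖A (n + 1)‖
  set Y := ‖B (n + 1)‖
  have hcross : 0 ≤ x * Y + y * X := by positivity
  calc m * (‖(a * A) (n + 1)‖ + ‖(b * B) (n + 1)‖) ≤ m * (x * X + y * Y) := by gcongr
    _ ≤ m * ((x + y) * (X + Y)) := by gcongr; linarith
    _ ≤ m * m * ((x + y) * (X + Y)) := by gcongr; exact le_mul_of_one_le_left (by positivity) hm
    _ = m * (x + y) * (m * (X + Y)) := by ring

lemma tsum_weightedCoeff_mul_le {a b A B : ℕ → R} (hs₁ : Summable (weightedCoeff a b))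
    (hs₂ : Summable (weightedCoeff A B)) :
    ∑' n, weightedCoeff (a * A) (b * B) n ≤
      (∑' n, weightedCoeff a b n) * ∑' n, weightedCoeff A B n := by
  have hw₁ := weightedCoeff_nonneg a b
  have hw₂ := weightedCoeff_nonneg A B
  have hprod := summable_mul_of_nonneg hw₁ hw₂ hs₁ hs₂
  have hle := weightedCoeff_mul_le a b A B
  calc ∑' n, weightedCoeff (a * A) (b * B) n ≤ ∑' n, weightedCoeff a b n * weightedCoeff A B n :=
        (hprod.of_nonneg_of_le (weightedCoeff_nonneg _ _) hle).tsum_le_tsum hle hprod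
    _ ≤ _ := tsum_mul_le_tsum_mul_tsum_of_nonneg hw₁ hw₂ hs₁ hs₂

lemma coeffNorm_mul_le {β₁ β₂ c C : R} {a b A B : ℕ → R} (hs₁ : Summable (weightedCoeff a b))
    (hs₂ : Summable (weightedCoeff A B)) :
    coeffNorm (β₁ * β₂) (c * C) (a * A) (b * B) ≤ coeffNorm β₁ c a b * coeffNorm β₂ C A B := by
  unfold coeffNorm
  set F := ∑' n, weightedCoeff a b n
  set G := ∑' n, weightedCoeff A B n
  have hF : 0 ≤ F := tsum_nonneg (weightedCoeff_nonneg a b)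
  have hG : 0 ≤ G := tsum_nonneg (weightedCoeff_nonneg A B)
  have hcross : 0 ≤ ‖β₁‖ * (‖C‖ + G) + ‖c‖ * (‖β₂‖ + G) + F * (‖β₂‖ + ‖C‖) := by positivity
  calc ‖β₁ * β₂‖ + ‖c * C‖ + ∑' n, weightedCoeff (a * A) (b * B) n
      ≤ ‖β₁‖ * ‖β₂‖ + ‖c‖ * ‖C‖ + F * G := by
        gcongr
        exacts [norm_mul_le _ _, norm_mul_le _ _, tsum_weightedCoeff_mul_le hs₁ hs₂]
    _ ≤ (‖β₁‖ + ‖c‖ + F) * (‖β₂‖ + ‖C‖ + G) := by linarith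

end CoeffNorm

theorem stmt16_general (α₁ α₂ β₁ β₂ c C : ℂ)
    (a b A B : ℕ → ℂ) (k₁ k₂ : ℝ)
    (hk₁1 : k₁ < 1) (hk₂0 : 0 < k₂) (hk₂1 : k₂ < 1)
    (hs₁ : Summable fun n : ℕ => ((n : ℝ) + 1) *
      (‖a (n + 1)‖ + ‖b (n + 1)‖))
    (hs₂ : Summable fun n : ℕ => ((n : ℝ) + 1) *
      (‖A (n + 1)‖ + ‖B (n + 1)‖))
    (h₁ : ‖β₁‖ + ‖c‖ +
      (∑' n : ℕ, ((n : ℝ) + 1) * (‖a (n + 1)‖ + ‖b (n + 1)‖)) ≤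
        k₁ * ‖α₁‖)
    (h₂ : ‖β₂‖ + ‖C‖ +
      (∑' n : ℕ, ((n : ℝ) + 1) * (‖A (n + 1)‖ + ‖B (n + 1)‖)) ≤
        k₂ * ‖α₂‖) :
    ‖β₁ * β₂‖ + ‖c * C‖ +
      (∑' n : ℕ, ((n : ℝ) + 1) *
        (‖a (n + 1) * A (n + 1)‖ + ‖b (n + 1) * B (n + 1)‖)) ≤
      Real.sqrt (k₁ * k₂) * ‖α₁ * α₂‖ := by
  change coeffNorm β₁ c a b ≤ k₁ * ‖α₁‖ at h₁
  change coeffNorm β₂ C A B ≤ k₂ * ‖α₂‖ at h₂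
  calc coeffNorm (β₁ * β₂) (c * C) (a * A) (b * B)
      ≤ coeffNorm β₁ c a b * coeffNorm β₂ C A B := coeffNorm_mul_le hs₁ hs₂
    _ ≤ k₁ * ‖α₁‖ * (k₂ * ‖α₂‖) :=
        mul_le_mul h₁ h₂ (coeffNorm_nonneg _ _ _ _) ((coeffNorm_nonneg _ _ _ _).trans h₁)
    _ = k₁ * k₂ * ‖α₁ * α₂‖ := by rw [norm_mul]; ring
    _ ≤ Real.sqrt (k₁ * k₂) * ‖α₁ * α₂‖ := by
        gcongr
        exact Real.le_sqrt_self_iff.2 (mul_le_one₀ hk₁1.le hk₂0.le hk₂1.le)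

theorem stmt16 (α₁ α₂ β₁ β₂ c C : ℂ) (hα₁ : α₁ ≠ 0) (hα₂ : α₂ ≠ 0)
    (a b A B : ℕ → ℂ) (k₁ k₂ : ℝ)
    (hk₁0 : 0 < k₁) (hk₁1 : k₁ < 1) (hk₂0 : 0 < k₂) (hk₂1 : k₂ < 1)
    (hs₁ : Summable fun n : ℕ => ((n : ℝ) + 1) *
      (‖a (n + 1)‖ + ‖b (n + 1)‖))
    (hs₂ : Summable fun n : ℕ => ((n : ℝ) + 1) *
      (‖A (n + 1)‖ + ‖B (n + 1)‖))
    (h₁ : ‖β₁‖ + ‖c‖ +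
      (∑' n : ℕ, ((n : ℝ) + 1) * (‖a (n + 1)‖ + ‖b (n + 1)‖)) ≤
        k₁ * ‖α₁‖)
    (h₂ : ‖β₂‖ + ‖C‖ +
      (∑' n : ℕ, ((n : ℝ) + 1) * (‖A (n + 1)‖ + ‖B (n + 1)‖)) ≤
        k₂ * ‖α₂‖) :
    ‖β₁ * β₂‖ + ‖c * C‖ +
      (∑' n : ℕ, ((n : ℝ) + 1) *
        (‖a (n + 1) * A (n + 1)‖ + ‖b (n + 1) * B (n + 1)‖)) ≤
      Real.sqrt (k₁ * k₂) * ‖α₁ * α₂‖ :=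
  stmt16_general α₁ α₂ β₁ β₂ c C a b A B k₁ k₂ hk₁1 hk₂0 hk₂1 hs₁ hs₂ h₁ h₂
end

section
/- The function f(z) = z − (i/6)·conj(z) + (i/4)·log|z| − (i/8)·z^{−4}, defined for |z| > 1, satisfies |f(z₁) − f(z₂)| ≥ (2/9)|z₁ − z₂| for all z₁, z₂ with |z₁| > 1, |z₂| > 1; in particular f is injective on the exterior unit disk. -/
/-!
Write `f z = z - g z` with `g z = (i/6) z̄ - (i/4) log|z| + (i/8) z⁻⁴`. On `|z| ≥ 1` the three
terms of `g` are Lipschitz with constants `1/6`, `1/4` (since `log` is `1`-Lipschitz on `[1, ∞)`)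
and `4 · 1/8` (since `z ↦ z⁻¹` maps `|z| ≥ 1` `1`-Lipschitzly into the closed unit disc, where
`w ↦ w⁴` is `4`-Lipschitz). So `g` is `11/12`-Lipschitz and `f` is bounded below by the remaining
`1 - 11/12 = 1/12`.
-/

open Complex ComplexConjugate

theorem Real.abs_log_sub_log_le_abs_sub {a b : ℝ} (ha : 1 ≤ a) (hb : 1 ≤ b) :
    |Real.log a - Real.log b| ≤ |a - b| := by
  wlog hba : b ≤ a generalizing a b
  · rw [abs_sub_comm, abs_sub_comm a b]
    exact this hb ha (le_of_not_ge hba)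
  have hb0 : 0 < b := by linarith
  rw [abs_of_nonneg (sub_nonneg.2 (Real.log_le_log hb0 hba)), abs_of_nonneg (sub_nonneg.2 hba)]
  calc Real.log a - Real.log b = Real.log (a / b) := (Real.log_div (by positivity) hb0.ne').symm
    _ ≤ a / b - 1 := Real.log_le_sub_one_of_pos (by positivity)
    _ = (a - b) / b := by field_simp
    _ ≤ a - b := div_le_self (by linarith) hb

theorem norm_inv_sub_inv_le_s18 {K : Type*} [NormedDivisionRing K] {a b : K}
    (ha : 1 ≤ ‖a‖) (hb : 1 ≤ ‖b‖) : ‖a⁻¹ - b⁻¹‖ ≤ ‖a - b‖ := by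
  have ha0 : a ≠ 0 := norm_pos_iff.1 (by linarith)
  have hb0 : b ≠ 0 := norm_pos_iff.1 (by linarith)
  rw [inv_sub_inv' ha0 hb0, norm_mul, norm_mul, norm_inv, norm_inv, norm_sub_rev b a]
  calc ‖a‖⁻¹ * ‖a - b‖ * ‖b‖⁻¹ ≤ 1 * ‖a - b‖ * 1 := by
        gcongr
        exacts [inv_le_one_of_one_le₀ ha, inv_le_one_of_one_le₀ hb]
    _ = ‖a - b‖ := by ring

theorem norm_pow_sub_pow_le {R : Type*} [SeminormedRing R] [NormOneClass R] {a b : R}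
    (ha : ‖a‖ ≤ 1) (hb : ‖b‖ ≤ 1) (n : ℕ) : ‖a ^ n - b ^ n‖ ≤ n * ‖a - b‖ := by
  induction n with
  | zero => simp
  | succ n ih =>
    have hbn : ‖b ^ n‖ ≤ 1 := (norm_pow_le b n).trans (pow_le_one₀ (norm_nonneg b) hb)
    calc ‖a ^ (n + 1) - b ^ (n + 1)‖ = ‖a * (a ^ n - b ^ n) + (a - b) * b ^ n‖ := by
          rw [pow_succ' a, pow_succ' b]; noncomm_ring
      _ ≤ ‖a‖ * ‖a ^ n - b ^ n‖ + ‖a - b‖ * ‖b ^ n‖ :=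
          (norm_add_le _ _).trans (add_le_add (norm_mul_le _ _) (norm_mul_le _ _))
      _ ≤ 1 * (n * ‖a - b‖) + ‖a - b‖ * 1 := by gcongr
      _ = (n + 1 : ℕ) * ‖a - b‖ := by push_cast; ring

theorem norm_zpow_neg_sub_zpow_neg_le_s18 {K : Type*} [NormedDivisionRing K] {a b : K}
    (ha : 1 ≤ ‖a‖) (hb : 1 ≤ ‖b‖) (n : ℕ) :
    ‖a ^ (-n : ℤ) - b ^ (-n : ℤ)‖ ≤ n * ‖a - b‖ := by
  rw [zpow_neg, zpow_neg, zpow_natCast, zpow_natCast, ← inv_pow, ← inv_pow]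
  calc ‖a⁻¹ ^ n - b⁻¹ ^ n‖ ≤ n * ‖a⁻¹ - b⁻¹‖ := by
        refine norm_pow_sub_pow_le ?_ ?_ n <;> rw [norm_inv] <;> exact inv_le_one_of_one_le₀ ‹_›
    _ ≤ n * ‖a - b‖ := by gcongr; exact norm_inv_sub_inv_le_s18 ha hb

theorem one_sub_mul_norm_sub_le_of_norm_sub_le {E : Type*} [SeminormedAddCommGroup E]
    {x y u v : E} {k : ℝ} (h : ‖u - v‖ ≤ k * ‖x - y‖) :
    (1 - k) * ‖x - y‖ ≤ ‖(x - u) - (y - v)‖ := by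
  have : ‖x - y‖ ≤ ‖(x - u) - (y - v)‖ + ‖u - v‖ :=
    calc ‖x - y‖ = ‖((x - u) - (y - v)) + (u - v)‖ := by congr 1; abel
      _ ≤ _ := norm_add_le _ _
  linarith

noncomputable def perturbation (z : ℂ) : ℂ :=
  I / 6 * conj z - I / 4 * Real.log ‖z‖ + I / 8 * z ^ (-4 : ℤ)

theorem norm_perturbation_sub_le {z₁ z₂ : ℂ} (h₁ : 1 ≤ ‖z₁‖) (h₂ : 1 ≤ ‖z₂‖) :
    ‖perturbation z₁ - perturbation z₂‖ ≤ 11 / 12 * ‖z₁ - z₂‖ := by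
  have hconj : ‖conj z₁ - conj z₂‖ = ‖z₁ - z₂‖ := by rw [← map_sub, norm_conj]
  have hlog : ‖((Real.log ‖z₁‖ : ℂ) - Real.log ‖z₂‖)‖ ≤ ‖z₁ - z₂‖ := by
    rw [← ofReal_sub, norm_real, Real.norm_eq_abs]
    exact (Real.abs_log_sub_log_le_abs_sub h₁ h₂).trans (abs_norm_sub_norm_le z₁ z₂)
  have hzpow : ‖z₁ ^ (-4 : ℤ) - z₂ ^ (-4 : ℤ)‖ ≤ 4 * ‖z₁ - z₂‖ :=
    mod_cast norm_zpow_neg_sub_zpow_neg_le_s18 h₁ h₂ 4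
  calc ‖perturbation z₁ - perturbation z₂‖
      = ‖I / 6 * (conj z₁ - conj z₂) - I / 4 * ((Real.log ‖z₁‖ : ℂ) - Real.log ‖z₂‖)
          + I / 8 * (z₁ ^ (-4 : ℤ) - z₂ ^ (-4 : ℤ))‖ := by
        simp only [perturbation]; ring_nf
    _ ≤ 1 / 6 * ‖conj z₁ - conj z₂‖ + 1 / 4 * ‖((Real.log ‖z₁‖ : ℂ) - Real.log ‖z₂‖)‖
          + 1 / 8 * ‖z₁ ^ (-4 : ℤ) - z₂ ^ (-4 : ℤ)‖ := by
        refine (norm_add_le _ _).trans (add_le_add ((norm_sub_le _ _).trans ?_) ?_) <;>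
          simp
    _ ≤ 1 / 6 * ‖z₁ - z₂‖ + 1 / 4 * ‖z₁ - z₂‖ + 1 / 8 * (4 * ‖z₁ - z₂‖) := by
        rw [hconj]; gcongr
    _ = 11 / 12 * ‖z₁ - z₂‖ := by ring

theorem stmt18 (f : ℂ → ℂ)
    (hf : ∀ z : ℂ, 1 < ‖z‖ →
      f z = z - (Complex.I / 6) * (starRingEnd ℂ) z +
        (Complex.I / 4) * Real.log ‖z‖ - (Complex.I / 8) * z ^ (-4 : ℤ)) :
    (∀ z₁ z₂ : ℂ, 1 < ‖z₁‖ → 1 < ‖z₂‖ →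
      (1 / 12) * ‖z₁ - z₂‖ ≤ ‖f z₁ - f z₂‖) ∧
      Set.InjOn f {z : ℂ | 1 < ‖z‖} := by
  have hf_sub : ∀ z : ℂ, 1 < ‖z‖ → f z = z - perturbation z := fun z hz => by
    rw [hf z hz, perturbation]; ring
  have lower : ∀ z₁ z₂ : ℂ, 1 < ‖z₁‖ → 1 < ‖z₂‖ → (1 / 12) * ‖z₁ - z₂‖ ≤ ‖f z₁ - f z₂‖ := by
    intro z₁ z₂ h₁ h₂
    rw [hf_sub z₁ h₁, hf_sub z₂ h₂]
    convert one_sub_mul_norm_sub_le_of_norm_sub_le (norm_perturbation_sub_le h₁.le h₂.le) using 2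
    norm_num
  refine ⟨lower, fun z₁ h₁ z₂ h₂ heq => ?_⟩
  have hle := lower z₁ z₂ h₁ h₂
  rw [heq, sub_self, norm_zero] at hle
  exact sub_eq_zero.1 (norm_le_zero_iff.1 (by linarith))
end
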